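/- Completeness of RPQ type inference for well-formed schemas: if S is well-formed and S ⊢ q : E, then for each (e_i, e_j) ∈ E there exists a finite graph G conforming to S and a pair (u,v) ∈ ⟦q⟧_G with u of type e_i and v of type e_j. -/

import Mathlib

/-! ### Conflict-free regular expressions over unordered words -/

inductive RE (σ : Type) : Type
  | eps : RE σ
  | sym : σ → RE σ
  | union : RE σ → RE σ → RE σ
  | conc : RE σ → RE σ → RE σ
  | star : σ → RE σ
  | plus : σ → RE σ
  deriving DecidableEq

def uconc {σ : Type} (L₁ L₂ : Set (Multiset σ)) : Set (Multiset σ) :=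
  {w | ∃ w₁ ∈ L₁, ∃ w₂ ∈ L₂, w = w₁ + w₂}

def resem {σ : Type} : RE σ → Set (Multiset σ)
  | .eps => {0}
  | .sym a => {{a}}
  | .union t₁ t₂ => resem t₁ ∪ resem t₂
  | .conc t₁ t₂ => uconc (resem t₁) (resem t₂)
  | .star a => {w | ∃ n : ℕ, w = Multiset.replicate n a}
  | .plus a => {w | ∃ n : ℕ, 1 ≤ n ∧ w = Multiset.replicate n a}

def syms {σ : Type} [DecidableEq σ] : RE σ → Finset σ
  | .eps => ∅
  | .sym a => {a}
  | .union t₁ t₂ => syms t₁ ∪ syms t₂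
  | .conc t₁ t₂ => syms t₁ ∪ syms t₂
  | .star a => {a}
  | .plus a => {a}

def CF {σ : Type} [DecidableEq σ] : RE σ → Prop
  | .union t₁ t₂ => CF t₁ ∧ CF t₂ ∧ Disjoint (syms t₁) (syms t₂)
  | .conc t₁ t₂ => CF t₁ ∧ CF t₂ ∧ Disjoint (syms t₁) (syms t₂)
  | _ => True

def distr {σ : Type} : RE σ → RE σ → RE σ
  | .union A B, C => .union (distr A C) (distr B C)
  | A, .union B C => .union (distr A B) (distr A C)
  | A, B => .conc A B

def norm {σ : Type} : RE σ → RE σ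
  | .eps => .eps
  | .sym a => .sym a
  | .union t₁ t₂ => .union (norm t₁) (norm t₂)
  | .conc t₁ t₂ => distr (norm t₁) (norm t₂)
  | .star a => .star a
  | .plus a => .plus a

/-- The list of union-free clauses of a (normalized) expression. -/
def clauses {σ : Type} : RE σ → List (RE σ)
  | .union t₁ t₂ => clauses t₁ ++ clauses t₂
  | t => [t]

/-- An occurrence of symbol `a` that is *not* under a Kleene star. -/
def occursUnstarred {σ : Type} (a : σ) : RE σ → Prop
  | .eps => False
  | .sym b => b = a
  | .union t₁ t₂ => occursUnstarred a t₁ ∨ occursUnstarred a t₂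
  | .conc t₁ t₂ => occursUnstarred a t₁ ∨ occursUnstarred a t₂
  | .star _ => False
  | .plus b => b = a

/-! ### Graph schemas -/

/-- A schema element: regular expressions for incoming and outgoing edges. -/
abbrev Elem (σ : Type) := RE σ × RE σ

/-- Double normalization: each element is split into one element per pair of
union-free clauses of the DNFs of its `in` and `out` expressions. -/
def DNorm {σ : Type} [DecidableEq σ] (S : Finset (Elem σ)) : Finset (Elem σ) :=
  S.biUnion (fun e => ((clauses (norm e.1)).product (clauses (norm e.2))).toFinset)

/-- Conditions 1–3 of the definition of graph schemas: symbol closure between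
incoming and outgoing expressions, and pairwise disjoint typings. -/
def IsSchema {σ : Type} [DecidableEq σ] (S : Finset (Elem σ)) : Prop :=
  (∀ e ∈ S, CF e.1 ∧ CF e.2) ∧
  (∀ e ∈ S, ∀ a ∈ syms e.1, ∃ e' ∈ S, a ∈ syms e'.2) ∧
  (∀ e ∈ S, ∀ a ∈ syms e.2, ∃ e' ∈ S, a ∈ syms e'.1) ∧
  (∀ e ∈ S, ∀ e' ∈ S, e ≠ e' →
    resem e.1 ∩ resem e'.1 = ∅ ∨ resem e.2 ∩ resem e'.2 = ∅)

/-- Well-formedness: whenever a symbol occurs in the `out` (resp. `in`)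
expressions of two distinct elements of `DNorm S`, every occurrence of it in an
`in` (resp. `out`) expression of `DNorm S` is under a star. -/
def WellFormed {σ : Type} [DecidableEq σ] (S : Finset (Elem σ)) : Prop :=
  (∀ a : σ, (∃ e₁ ∈ DNorm S, ∃ e₂ ∈ DNorm S, e₁ ≠ e₂ ∧
      a ∈ syms e₁.2 ∧ a ∈ syms e₂.2) →
    ∀ e ∈ DNorm S, ¬ occursUnstarred a e.1) ∧
  (∀ a : σ, (∃ e₁ ∈ DNorm S, ∃ e₂ ∈ DNorm S, e₁ ≠ e₂ ∧
      a ∈ syms e₁.1 ∧ a ∈ syms e₂.1) →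
    ∀ e ∈ DNorm S, ¬ occursUnstarred a e.2)

/-! ### Data graphs and conformance -/

def inLabels {V σ : Type} [DecidableEq V] (E : Finset (V × σ × V)) (v : V) :
    Multiset σ :=
  ((E.filter (fun t => t.2.2 = v)).val.map (fun t => t.2.1))

def outLabels {V σ : Type} [DecidableEq V] (E : Finset (V × σ × V)) (v : V) :
    Multiset σ :=
  ((E.filter (fun t => t.1 = v)).val.map (fun t => t.2.1))

/-- A node has type `e` if its incoming/outgoing label multisets belong to the
languages of `e`. -/
def HasType {V σ : Type} [DecidableEq V] (E : Finset (V × σ × V)) (v : V)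
    (e : Elem σ) : Prop :=
  inLabels E v ∈ resem e.1 ∧ outLabels E v ∈ resem e.2

/-- A graph conforms to a schema if every node is typed by some element. -/
def Conforms {V σ : Type} [DecidableEq V] (E : Finset (V × σ × V))
    (S : Finset (Elem σ)) : Prop :=
  ∀ v : V, ∃ e ∈ S, HasType E v e

/-! ### RPQs, NREs, and their semantics -/

inductive RPQ (σ : Type) : Type
  | eps : RPQ σ
  | sym : σ → RPQ σ
  | union : RPQ σ → RPQ σ → RPQ σ
  | conc : RPQ σ → RPQ σ → RPQ σ
  | star : RPQ σ → RPQ σ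

inductive NRE (σ : Type) : Type
  | eps : NRE σ
  | sym : σ → NRE σ
  | back : σ → NRE σ
  | union : NRE σ → NRE σ → NRE σ
  | conc : NRE σ → NRE σ → NRE σ
  | star : NRE σ → NRE σ
  | test : NRE σ → NRE σ

/-- Composition of binary relations given as sets of pairs. -/
def relComp {α : Type} (R₁ R₂ : Set (α × α)) : Set (α × α) :=
  {p | ∃ m, (p.1, m) ∈ R₁ ∧ (m, p.2) ∈ R₂}

/-- `n`-fold composition, with the full identity relation as base. -/
def powRel {α : Type} (R : Set (α × α)) : ℕ → Set (α × α)
  | 0 => {p | p.1 = p.2}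
  | n + 1 => relComp (powRel R n) R

/-- Semantics of RPQs on a graph with edge set `E`. -/
def rpqSem {V σ : Type} (E : Set (V × σ × V)) : RPQ σ → Set (V × V)
  | .eps => {p | p.1 = p.2}
  | .sym a => {p | (p.1, a, p.2) ∈ E}
  | .union r₁ r₂ => rpqSem E r₁ ∪ rpqSem E r₂
  | .conc r₁ r₂ => relComp (rpqSem E r₁) (rpqSem E r₂)
  | .star r => ⋃ i : ℕ, powRel (rpqSem E r) i

/-- Semantics of NREs on a graph with edge set `E`. -/
def nreSem {V σ : Type} (E : Set (V × σ × V)) : NRE σ → Set (V × V)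
  | .eps => {p | p.1 = p.2}
  | .sym a => {p | (p.1, a, p.2) ∈ E}
  | .back a => {p | (p.2, a, p.1) ∈ E}
  | .union n₁ n₂ => nreSem E n₁ ∪ nreSem E n₂
  | .conc n₁ n₂ => relComp (nreSem E n₁) (nreSem E n₂)
  | .star n => ⋃ i : ℕ, powRel (nreSem E n) i
  | .test n => {p | p.1 = p.2 ∧ ∃ v, (p.1, v) ∈ nreSem E n}

/-! ### Type inference -/

/-- The identity relation on the elements of a schema. -/
def relId {σ : Type} (S : Finset (Elem σ)) : Set (Elem σ × Elem σ) :=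
  {p | p.1 ∈ S ∧ p.1 = p.2}

/-- `n`-fold composition with the identity on `S` as base. -/
def spowRel {σ : Type} (S : Finset (Elem σ)) (R : Set (Elem σ × Elem σ)) :
    ℕ → Set (Elem σ × Elem σ)
  | 0 => relId S
  | n + 1 => relComp (spowRel S R n) R

/-- Type inference for RPQs. -/
def rpqInf {σ : Type} [DecidableEq σ] (S : Finset (Elem σ)) :
    RPQ σ → Set (Elem σ × Elem σ)
  | .eps => relId S
  | .sym a => {p | p.1 ∈ S ∧ p.2 ∈ S ∧ a ∈ syms p.1.2 ∧ a ∈ syms p.2.1}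
  | .union r₁ r₂ => rpqInf S r₁ ∪ rpqInf S r₂
  | .conc r₁ r₂ => relComp (rpqInf S r₁) (rpqInf S r₂)
  | .star r => ⋃ i : ℕ, spowRel S (rpqInf S r) i

/-- `first` of a set of element pairs. -/
def firstOf {σ : Type} (R : Set (Elem σ × Elem σ)) : Set (Elem σ) :=
  {e | ∃ e', (e, e') ∈ R}

/-- Type inference for NREs. -/
def nreInf {σ : Type} [DecidableEq σ] (S : Finset (Elem σ)) :
    NRE σ → Set (Elem σ × Elem σ)
  | .eps => relId S
  | .sym a => {p | p.1 ∈ S ∧ p.2 ∈ S ∧ a ∈ syms p.1.2 ∧ a ∈ syms p.2.1}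
  | .back a => {p | p.1 ∈ S ∧ p.2 ∈ S ∧ a ∈ syms p.1.1 ∧ a ∈ syms p.2.2}
  | .union n₁ n₂ => nreInf S n₁ ∪ nreInf S n₂
  | .conc n₁ n₂ => relComp (nreInf S n₁) (nreInf S n₂)
  | .star n => ⋃ i : ℕ, spowRel S (nreInf S n) i
  | .test n => {p | p.1 ∈ firstOf (nreInf S n) ∧ p.2 ∈ firstOf (nreInf S n)}

/-! ### Paths -/

/-- `GConnects E p u v`: path `p` (a word over `σ`) connects node `u` to `v`. -/
inductive GConnects {V σ : Type} (E : Set (V × σ × V)) : List σ → V → V → Prop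
  | nil (u : V) : GConnects E [] u u
  | cons {u u' v : V} {a : σ} {p : List σ} :
      (u, a, u') ∈ E → GConnects E p u' v → GConnects E (a :: p) u v

/-- The language of paths that can match an RPQ. -/
def pathsOf {σ : Type} : RPQ σ → Set (List σ)
  | .eps => {[]}
  | .sym a => {[a]}
  | .union q₁ q₂ => pathsOf q₁ ∪ pathsOf q₂
  | .conc q₁ q₂ => {p | ∃ p₁ ∈ pathsOf q₁, ∃ p₂ ∈ pathsOf q₂, p = p₁ ++ p₂}
  | .star q => {p | ∃ l : List (List σ), (∀ x ∈ l, x ∈ pathsOf q) ∧ p = l.flatten}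

/-- `SConnects S p e₁ e₂`: path `p` connects schema element `e₁` to `e₂` over `S`. -/
inductive SConnects {σ : Type} [DecidableEq σ] (S : Finset (Elem σ)) :
    List σ → Elem σ → Elem σ → Prop
  | nil (e : Elem σ) : SConnects S [] e e
  | cons {e₀ e eₜ : Elem σ} {a : σ} {p : List σ} :
      e ∈ S → a ∈ syms e₀.2 → a ∈ syms e.1 →
      SConnects S p e eₜ → SConnects S (a :: p) e₀ eₜ

/-- The edge relation of a finite graph, as a set. -/
def edgeSet {V σ : Type} (E : Finset (V × σ × V)) : Set (V × σ × V) := ↑E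


/-! ### Auxiliary lemmas -/
set_option linter.unusedSectionVars false

/-- Union-freeness. -/
def UF {σ : Type} : RE σ → Prop
  | .union _ _ => False
  | .conc t₁ t₂ => UF t₁ ∧ UF t₂
  | _ => True

section REAux
variable {σ : Type} [DecidableEq σ]

lemma mem_clauses_distr {A B c : RE σ} :
    c ∈ clauses (distr A B) ↔ ∃ x ∈ clauses A, ∃ y ∈ clauses B, c = .conc x y := by
  induction A generalizing B
  case union A₁ A₂ ih₁ ih₂ =>
    simp only [distr, clauses, List.mem_append, ih₁, ih₂]
    constructor
    · rintro (⟨x, hx, y, hy, rfl⟩ | ⟨x, hx, y, hy, rfl⟩)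
      · exact ⟨x, Or.inl hx, y, hy, rfl⟩
      · exact ⟨x, Or.inr hx, y, hy, rfl⟩
    · rintro ⟨x, hx | hx, y, hy, rfl⟩
      · exact Or.inl ⟨x, hx, y, hy, rfl⟩
      · exact Or.inr ⟨x, hx, y, hy, rfl⟩
  all_goals (
    induction B
    case union B₁ B₂ jh₁ jh₂ =>
      simp only [distr, clauses, List.mem_append, jh₁, jh₂]
      constructor
      · rintro (⟨x, hx, y, hy, rfl⟩ | ⟨x, hx, y, hy, rfl⟩)
        · exact ⟨x, hx, y, Or.inl hy, rfl⟩
        · exact ⟨x, hx, y, Or.inr hy, rfl⟩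
      · rintro ⟨x, hx, y, hy | hy, rfl⟩
        · exact Or.inl ⟨x, hx, y, hy, rfl⟩
        · exact Or.inr ⟨x, hx, y, hy, rfl⟩
    all_goals simp [distr, clauses])

lemma uf_clauses_norm {t : RE σ} : ∀ c ∈ clauses (_root_.norm t), UF c := by
  induction t with
  | eps => simp [_root_.norm, clauses, UF]
  | sym a => simp [_root_.norm, clauses, UF]
  | star a => simp [_root_.norm, clauses, UF]
  | plus a => simp [_root_.norm, clauses, UF]
  | union t₁ t₂ ih₁ ih₂ =>
      intro c hc
      simp only [_root_.norm, clauses, List.mem_append] at hc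
      rcases hc with h | h
      · exact ih₁ c h
      · exact ih₂ c h
  | conc t₁ t₂ ih₁ ih₂ =>
      intro c hc
      rw [_root_.norm, mem_clauses_distr] at hc
      obtain ⟨x, hx, y, hy, rfl⟩ := hc
      exact ⟨ih₁ x hx, ih₂ y hy⟩

lemma syms_distr {A B : RE σ} : syms (distr A B) = syms A ∪ syms B := by
  induction A generalizing B
  case union A₁ A₂ ih₁ ih₂ =>
    ext x; simp only [distr, syms, ih₁, ih₂, Finset.mem_union]; tauto
  all_goals (
    induction B
    case union B₁ B₂ jh₁ jh₂ =>
      ext x; simp only [distr, syms, jh₁, jh₂, Finset.mem_union]; tauto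
    all_goals simp [distr, syms])

lemma syms_norm {t : RE σ} : syms (_root_.norm t) = syms t := by
  induction t with
  | union t₁ t₂ ih₁ ih₂ => simp [_root_.norm, syms, ih₁, ih₂]
  | conc t₁ t₂ ih₁ ih₂ => simp [_root_.norm, syms, syms_distr, ih₁, ih₂]
  | _ => rfl

lemma uconc_union_left {L₁ L₂ L₃ : Set (Multiset σ)} :
    uconc (L₁ ∪ L₂) L₃ = uconc L₁ L₃ ∪ uconc L₂ L₃ := by
  ext w
  constructor
  · rintro ⟨w₁, h₁ | h₁, w₂, h₂, rfl⟩
    · exact Or.inl ⟨w₁, h₁, w₂, h₂, rfl⟩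
    · exact Or.inr ⟨w₁, h₁, w₂, h₂, rfl⟩
  · rintro (⟨w₁, h₁, w₂, h₂, rfl⟩ | ⟨w₁, h₁, w₂, h₂, rfl⟩)
    · exact ⟨w₁, Or.inl h₁, w₂, h₂, rfl⟩
    · exact ⟨w₁, Or.inr h₁, w₂, h₂, rfl⟩

lemma uconc_union_right {L₁ L₂ L₃ : Set (Multiset σ)} :
    uconc L₁ (L₂ ∪ L₃) = uconc L₁ L₂ ∪ uconc L₁ L₃ := by
  ext w
  constructor
  · rintro ⟨w₁, h₁, w₂, h₂ | h₂, rfl⟩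
    · exact Or.inl ⟨w₁, h₁, w₂, h₂, rfl⟩
    · exact Or.inr ⟨w₁, h₁, w₂, h₂, rfl⟩
  · rintro (⟨w₁, h₁, w₂, h₂, rfl⟩ | ⟨w₁, h₁, w₂, h₂, rfl⟩)
    · exact ⟨w₁, h₁, w₂, Or.inl h₂, rfl⟩
    · exact ⟨w₁, h₁, w₂, Or.inr h₂, rfl⟩

lemma resem_distr {A B : RE σ} : resem (distr A B) = uconc (resem A) (resem B) := by
  induction A generalizing B
  case union A₁ A₂ ih₁ ih₂ =>
    simp only [distr, resem, ih₁, ih₂, uconc_union_left]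
  all_goals (
    induction B
    case union B₁ B₂ jh₁ jh₂ =>
      simp only [distr, resem, jh₁, jh₂, uconc_union_right]
    all_goals simp [distr, resem])

lemma resem_norm {t : RE σ} : resem (_root_.norm t) = resem t := by
  induction t with
  | union t₁ t₂ ih₁ ih₂ => simp [_root_.norm, resem, ih₁, ih₂]
  | conc t₁ t₂ ih₁ ih₂ => simp [_root_.norm, resem, resem_distr, ih₁, ih₂]
  | _ => rfl

lemma syms_of_mem_clauses {t c : RE σ} (h : c ∈ clauses t) : syms c ⊆ syms t := by
  induction t with
  | union t₁ t₂ ih₁ ih₂ =>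
      simp only [clauses, List.mem_append] at h
      rcases h with h | h
      · exact (ih₁ h).trans Finset.subset_union_left
      · exact (ih₂ h).trans Finset.subset_union_right
  | eps => simp only [clauses, List.mem_singleton] at h; subst h; rfl
  | sym a => simp only [clauses, List.mem_singleton] at h; subst h; rfl
  | conc t₁ t₂ ih₁ ih₂ => simp only [clauses, List.mem_singleton] at h; subst h; rfl
  | star a => simp only [clauses, List.mem_singleton] at h; subst h; rfl
  | plus a => simp only [clauses, List.mem_singleton] at h; subst h; rfl

lemma resem_of_mem_clauses {t c : RE σ} (h : c ∈ clauses t) : resem c ⊆ resem t := by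
  induction t with
  | union t₁ t₂ ih₁ ih₂ =>
      simp only [clauses, List.mem_append] at h
      rcases h with h | h
      · exact (ih₁ h).trans Set.subset_union_left
      · exact (ih₂ h).trans Set.subset_union_right
  | eps => simp only [clauses, List.mem_singleton] at h; subst h; rfl
  | sym a => simp only [clauses, List.mem_singleton] at h; subst h; rfl
  | conc t₁ t₂ ih₁ ih₂ => simp only [clauses, List.mem_singleton] at h; subst h; rfl
  | star a => simp only [clauses, List.mem_singleton] at h; subst h; rfl
  | plus a => simp only [clauses, List.mem_singleton] at h; subst h; rfl

lemma exists_clause_of_mem_syms {t : RE σ} {a : σ} (h : a ∈ syms t) :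
    ∃ c ∈ clauses t, a ∈ syms c := by
  induction t with
  | union t₁ t₂ ih₁ ih₂ =>
      simp only [syms, Finset.mem_union] at h
      rcases h with h | h
      · obtain ⟨c, hc, hac⟩ := ih₁ h
        exact ⟨c, by simp [clauses, List.mem_append, hc], hac⟩
      · obtain ⟨c, hc, hac⟩ := ih₂ h
        exact ⟨c, by simp [clauses, List.mem_append, hc], hac⟩
  | eps => exact ⟨_, by simp [clauses], h⟩
  | sym b => exact ⟨_, by simp [clauses], h⟩
  | conc t₁ t₂ ih₁ ih₂ => exact ⟨_, by simp [clauses], h⟩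
  | star b => exact ⟨_, by simp [clauses], h⟩
  | plus b => exact ⟨_, by simp [clauses], h⟩

lemma exists_clause (t : RE σ) : ∃ c, c ∈ clauses t := by
  induction t with
  | union t₁ t₂ ih₁ ih₂ =>
      obtain ⟨c, hc⟩ := ih₁
      exact ⟨c, by simp [clauses, List.mem_append, hc]⟩
  | eps => exact ⟨.eps, by simp [clauses]⟩
  | sym b => exact ⟨.sym b, by simp [clauses]⟩
  | conc t₁ t₂ ih₁ ih₂ => exact ⟨.conc t₁ t₂, by simp [clauses]⟩
  | star b => exact ⟨.star b, by simp [clauses]⟩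
  | plus b => exact ⟨.plus b, by simp [clauses]⟩

lemma cf_clauses_norm {t : RE σ} (hcf : CF t) : ∀ c ∈ clauses (_root_.norm t), CF c := by
  induction t with
  | eps => simp [_root_.norm, clauses, CF]
  | sym a => simp [_root_.norm, clauses, CF]
  | star a => simp [_root_.norm, clauses, CF]
  | plus a => simp [_root_.norm, clauses, CF]
  | union t₁ t₂ ih₁ ih₂ =>
      intro c hc
      simp only [_root_.norm, clauses, List.mem_append] at hc
      rcases hc with h | h
      · exact ih₁ hcf.1 c h
      · exact ih₂ hcf.2.1 c h
  | conc t₁ t₂ ih₁ ih₂ =>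
      intro c hc
      rw [_root_.norm, mem_clauses_distr] at hc
      obtain ⟨x, hx, y, hy, rfl⟩ := hc
      refine ⟨ih₁ hcf.1 x hx, ih₂ hcf.2.1 y hy, ?_⟩
      have hx' : syms x ⊆ syms t₁ := by
        have := syms_of_mem_clauses hx; rwa [syms_norm] at this
      have hy' : syms y ⊆ syms t₂ := by
        have := syms_of_mem_clauses hy; rwa [syms_norm] at this
      exact Finset.disjoint_of_subset_left hx'
        (Finset.disjoint_of_subset_right hy' hcf.2.2)

lemma mem_syms_of_unstarred {t : RE σ} {a : σ} (h : occursUnstarred a t) : a ∈ syms t := by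
  induction t with
  | union t₁ t₂ ih₁ ih₂ =>
      rcases h with h | h
      · exact Finset.mem_union_left _ (ih₁ h)
      · exact Finset.mem_union_right _ (ih₂ h)
  | conc t₁ t₂ ih₁ ih₂ =>
      rcases h with h | h
      · exact Finset.mem_union_left _ (ih₁ h)
      · exact Finset.mem_union_right _ (ih₂ h)
  | eps => exact absurd h not_false
  | sym b => simp only [occursUnstarred] at h; simp [syms, h]
  | star b => exact absurd h not_false
  | plus b => simp only [occursUnstarred] at h; simp [syms, h]

/-! ### Word construction for union-free conflict-free clauses -/

/-- Count of symbol `a` in words produced by `mkWord` as a function of the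
parameter. -/
def cnt {σ : Type} [DecidableEq σ] (a : σ) : RE σ → ℕ → ℕ
  | .eps, _ => 0
  | .sym b, _ => if b = a then 1 else 0
  | .union _ _, _ => 0
  | .conc t₁ t₂, n => cnt a t₁ n + cnt a t₂ n
  | .star b, n => if b = a then n else 0
  | .plus b, n => if b = a then max 1 n else 0

/-- A canonical word with prescribed per-symbol counts. -/
def mkWord {σ : Type} (f : σ → ℕ) : RE σ → Multiset σ
  | .eps => 0
  | .sym b => {b}
  | .union _ _ => 0
  | .conc t₁ t₂ => mkWord f t₁ + mkWord f t₂
  | .star b => Multiset.replicate (f b) b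
  | .plus b => Multiset.replicate (max 1 (f b)) b

lemma mkWord_mem {t : RE σ} (h : UF t) (f : σ → ℕ) : mkWord f t ∈ resem t := by
  induction t with
  | eps => exact rfl
  | sym b => exact rfl
  | union t₁ t₂ ih₁ ih₂ => exact absurd h not_false
  | conc t₁ t₂ ih₁ ih₂ => exact ⟨_, ih₁ h.1, _, ih₂ h.2, rfl⟩
  | star b => exact ⟨f b, rfl⟩
  | plus b => exact ⟨max 1 (f b), le_max_left _ _, rfl⟩

lemma count_mkWord {t : RE σ} (f : σ → ℕ) (a : σ) :
    (mkWord f t).count a = cnt a t (f a) := by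
  induction t with
  | eps => rfl
  | sym b =>
      simp only [mkWord, cnt]
      by_cases h : b = a
      · subst h; simp
      · simp [Multiset.count_singleton, h, Ne.symm h]
  | union t₁ t₂ ih₁ ih₂ => rfl
  | conc t₁ t₂ ih₁ ih₂ => simp [mkWord, cnt, Multiset.count_add, ih₁, ih₂]
  | star b =>
      simp only [mkWord, cnt, Multiset.count_replicate]
      by_cases h : b = a <;> simp [h]
  | plus b =>
      simp only [mkWord, cnt, Multiset.count_replicate]
      by_cases h : b = a <;> simp [h]

lemma cnt_of_not_mem_syms {t : RE σ} {a : σ} (h : a ∉ syms t) (n : ℕ) :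
    cnt a t n = 0 := by
  induction t with
  | eps => rfl
  | sym b =>
      simp only [syms, Finset.mem_singleton] at h
      simp [cnt, Ne.symm h]
  | union t₁ t₂ ih₁ ih₂ => rfl
  | conc t₁ t₂ ih₁ ih₂ =>
      simp only [syms, Finset.mem_union, not_or] at h
      simp [cnt, ih₁ h.1, ih₂ h.2]
  | star b =>
      simp only [syms, Finset.mem_singleton] at h
      simp [cnt]; intro hba; exact absurd hba (fun hb => h hb.symm)
  | plus b =>
      simp only [syms, Finset.mem_singleton] at h
      simp [cnt]; intro hba; exact absurd hba (fun hb => h hb.symm)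

lemma cnt_one {t : RE σ} {a : σ} (huf : UF t) (hcf : CF t) (h : a ∈ syms t) :
    cnt a t 1 = 1 := by
  induction t with
  | eps => exact absurd h (by simp [syms])
  | sym b =>
      simp only [syms, Finset.mem_singleton] at h
      simp [cnt, h]
  | union t₁ t₂ ih₁ ih₂ => exact absurd huf not_false
  | conc t₁ t₂ ih₁ ih₂ =>
      simp only [syms, Finset.mem_union] at h
      rcases h with h | h
      · have h2 : a ∉ syms t₂ := fun h2 => Finset.disjoint_left.mp hcf.2.2 h h2
        simp [cnt, ih₁ huf.1 hcf.1 h, cnt_of_not_mem_syms h2]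
      · have h1 : a ∉ syms t₁ := fun h1 => Finset.disjoint_left.mp hcf.2.2 h1 h
        simp [cnt, ih₂ huf.2 hcf.2.1 h, cnt_of_not_mem_syms h1]
  | star b =>
      simp only [syms, Finset.mem_singleton] at h
      simp [cnt, h]
  | plus b =>
      simp only [syms, Finset.mem_singleton] at h
      simp [cnt, h]

lemma cnt_starred {t : RE σ} {a : σ} (huf : UF t) (hcf : CF t) (h : a ∈ syms t)
    (hns : ¬ occursUnstarred a t) (n : ℕ) : cnt a t n = n := by
  induction t with
  | eps => exact absurd h (by simp [syms])
  | sym b =>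
      simp only [syms, Finset.mem_singleton] at h
      exact absurd h.symm hns
  | union t₁ t₂ ih₁ ih₂ => exact absurd huf not_false
  | conc t₁ t₂ ih₁ ih₂ =>
      simp only [occursUnstarred, not_or] at hns
      simp only [syms, Finset.mem_union] at h
      rcases h with h | h
      · have h2 : a ∉ syms t₂ := fun h2 => Finset.disjoint_left.mp hcf.2.2 h h2
        simp [cnt, ih₁ huf.1 hcf.1 h hns.1, cnt_of_not_mem_syms h2]
      · have h1 : a ∉ syms t₁ := fun h1 => Finset.disjoint_left.mp hcf.2.2 h1 h
        simp [cnt, ih₂ huf.2 hcf.2.1 h hns.2, cnt_of_not_mem_syms h1]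
  | star b =>
      simp only [syms, Finset.mem_singleton] at h
      simp [cnt, h]
  | plus b =>
      simp only [syms, Finset.mem_singleton] at h
      exact absurd h.symm hns

/-- The key realizability lemma: a multiset whose counts are `1` on unstarred
symbols and `0` outside the symbols of a union-free conflict-free clause
belongs to its language. -/
lemma mem_resem_of_counts {t : RE σ} {w : Multiset σ} (huf : UF t) (hcf : CF t)
    (h0 : ∀ a, a ∉ syms t → w.count a = 0)
    (h1 : ∀ a, occursUnstarred a t → w.count a = 1) :
    w ∈ resem t := by
  have : w = mkWord (fun a => w.count a) t := by
    ext a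
    rw [count_mkWord]
    by_cases hs : a ∈ syms t
    · by_cases hu : occursUnstarred a t
      · rw [h1 a hu, cnt_one huf hcf hs]
      · rw [cnt_starred huf hcf hs hu]
    · rw [h0 a hs, cnt_of_not_mem_syms hs]
  rw [this]
  exact mkWord_mem huf _

/-! ### DNorm lemmas -/

lemma mem_DNorm {S : Finset (Elem σ)} {eh : Elem σ} :
    eh ∈ DNorm S ↔ ∃ e ∈ S, eh.1 ∈ clauses (_root_.norm e.1) ∧ eh.2 ∈ clauses (_root_.norm e.2) := by
  simp only [DNorm, Finset.mem_biUnion, List.mem_toFinset]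
  constructor
  · rintro ⟨e, he, hmem⟩
    obtain ⟨h1, h2⟩ := List.pair_mem_product.mp hmem
    exact ⟨e, he, h1, h2⟩
  · rintro ⟨e, he, h1, h2⟩
    exact ⟨e, he, List.pair_mem_product.mpr ⟨h1, h2⟩⟩

lemma DNorm_cf {S : Finset (Elem σ)} (hS : IsSchema S) {eh : Elem σ} (h : eh ∈ DNorm S) :
    (UF eh.1 ∧ CF eh.1) ∧ (UF eh.2 ∧ CF eh.2) := by
  obtain ⟨e, he, h1, h2⟩ := mem_DNorm.mp h
  exact ⟨⟨uf_clauses_norm _ h1, cf_clauses_norm (hS.1 e he).1 _ h1⟩,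
    ⟨uf_clauses_norm _ h2, cf_clauses_norm (hS.1 e he).2 _ h2⟩⟩

lemma DNorm_resem {S : Finset (Elem σ)} {eh : Elem σ} (h : eh ∈ DNorm S) :
    ∃ e ∈ S, resem eh.1 ⊆ resem e.1 ∧ resem eh.2 ⊆ resem e.2 := by
  obtain ⟨e, he, h1, h2⟩ := mem_DNorm.mp h
  refine ⟨e, he, ?_, ?_⟩
  · exact (resem_of_mem_clauses h1).trans resem_norm.subset
  · exact (resem_of_mem_clauses h2).trans resem_norm.subset

/-- Closure transfer to `DNorm`: every symbol occurring in an `out` clause also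
occurs in some `in` clause. -/
lemma DNorm_closure_out {S : Finset (Elem σ)} (hS : IsSchema S) {eh : Elem σ} {a : σ}
    (h : eh ∈ DNorm S) (ha : a ∈ syms eh.2) :
    ∃ eh' ∈ DNorm S, a ∈ syms eh'.1 := by
  obtain ⟨e, he, h1, h2⟩ := mem_DNorm.mp h
  have ha' : a ∈ syms e.2 := by
    have := syms_of_mem_clauses h2 ha; rwa [syms_norm] at this
  obtain ⟨e', he', ha''⟩ := hS.2.2.1 e he a ha'
  have : a ∈ syms (_root_.norm e'.1) := by rwa [syms_norm]
  obtain ⟨c, hc, hac⟩ := exists_clause_of_mem_syms this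
  obtain ⟨c₂, hc₂⟩ := exists_clause (_root_.norm e'.2)
  exact ⟨(c, c₂), mem_DNorm.mpr ⟨e', he', hc, hc₂⟩, hac⟩

lemma DNorm_closure_in {S : Finset (Elem σ)} (hS : IsSchema S) {eh : Elem σ} {a : σ}
    (h : eh ∈ DNorm S) (ha : a ∈ syms eh.1) :
    ∃ eh' ∈ DNorm S, a ∈ syms eh'.2 := by
  obtain ⟨e, he, h1, h2⟩ := mem_DNorm.mp h
  have ha' : a ∈ syms e.1 := by
    have := syms_of_mem_clauses h1 ha; rwa [syms_norm] at this
  obtain ⟨e', he', ha''⟩ := hS.2.1 e he a ha'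
  have : a ∈ syms (_root_.norm e'.2) := by rwa [syms_norm]
  obtain ⟨c, hc, hac⟩ := exists_clause_of_mem_syms this
  obtain ⟨c₁, hc₁⟩ := exists_clause (_root_.norm e'.1)
  exact ⟨(c₁, c), mem_DNorm.mpr ⟨e', he', hc₁, hc⟩, hac⟩

/-- "There is a flexible (starred) in-slot for `a`". -/
def FlexIn (S : Finset (Elem σ)) (a : σ) : Prop :=
  ∃ eh ∈ DNorm S, a ∈ syms eh.1 ∧ ¬ occursUnstarred a eh.1

def FlexOut (S : Finset (Elem σ)) (a : σ) : Prop :=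
  ∃ eh ∈ DNorm S, a ∈ syms eh.2 ∧ ¬ occursUnstarred a eh.2

/-- In the rigid case there are unique in- and out-elements, both unstarred. -/
lemma rigid_case {S : Finset (Elem σ)} (hS : IsSchema S) (hwf : WellFormed S) {a : σ}
    (h : (∃ eh ∈ DNorm S, occursUnstarred a eh.2 ∧ ¬ FlexIn S a) ∨
         (∃ eh ∈ DNorm S, occursUnstarred a eh.1 ∧ ¬ FlexOut S a)) :
    ∃ eo ∈ DNorm S, ∃ ei ∈ DNorm S,
      occursUnstarred a eo.2 ∧ occursUnstarred a ei.1 ∧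
      (∀ eh ∈ DNorm S, a ∈ syms eh.2 → eh = eo) ∧
      (∀ eh ∈ DNorm S, a ∈ syms eh.1 → eh = ei) := by
  classical
  rcases h with ⟨eo, hom, hou, hnf⟩ | ⟨ei, him, hiu, hnf⟩
  · -- there is an unstarred out-occurrence, and no flexible in-slot
    obtain ⟨ei, him, his⟩ := DNorm_closure_out hS hom (mem_syms_of_unstarred hou)
    have hiu : occursUnstarred a ei.1 := by
      by_contra hh; exact hnf ⟨ei, him, his, hh⟩
    have huniqi : ∀ eh ∈ DNorm S, a ∈ syms eh.1 → eh = ei := by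
      intro eh hehm hehs
      by_contra hne
      exact hwf.2 a ⟨eh, hehm, ei, him, hne, hehs, his⟩ eo hom hou
    have huniqo : ∀ eh ∈ DNorm S, a ∈ syms eh.2 → eh = eo := by
      intro eh hehm hehs
      by_contra hne
      exact hwf.1 a ⟨eh, hehm, eo, hom, hne, hehs, mem_syms_of_unstarred hou⟩ ei him hiu
    exact ⟨eo, hom, ei, him, hou, hiu, huniqo, huniqi⟩
  · -- symmetric
    obtain ⟨eo, hom, hos⟩ := DNorm_closure_in hS him (mem_syms_of_unstarred hiu)
    have hou : occursUnstarred a eo.2 := by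
      by_contra hh; exact hnf ⟨eo, hom, hos, hh⟩
    have huniqo : ∀ eh ∈ DNorm S, a ∈ syms eh.2 → eh = eo := by
      intro eh hehm hehs
      by_contra hne
      exact hwf.1 a ⟨eh, hehm, eo, hom, hne, hehs, hos⟩ ei him hiu
    have huniqi : ∀ eh ∈ DNorm S, a ∈ syms eh.1 → eh = ei := by
      intro eh hehm hehs
      by_contra hne
      exact hwf.2 a ⟨eh, hehm, ei, him, hne, hehs, mem_syms_of_unstarred hiu⟩ eo hom hou
    exact ⟨eo, hom, ei, him, hou, hiu, huniqo, huniqi⟩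

/-! ### Oriented graphs from partial functions -/

section OG
variable {W : Type} [DecidableEq W] [Fintype W]

/-- Union of the graph of a partial "successor" function and the cograph of a
partial "predecessor" function. -/
noncomputable def og (fo hi : W → Option W) : Finset (W × W) :=
  (Finset.univ.filterMap (fun v => (fo v).map (fun w => (v, w)))
    (by
      intro a a' b hb hb'
      simp only [Option.mem_def, Option.map_eq_some_iff] at hb hb'
      obtain ⟨w, -, rfl⟩ := hb
      obtain ⟨w', -, h⟩ := hb'
      exact ((Prod.ext_iff.mp h).1).symm)) ∪
  (Finset.univ.filterMap (fun w => (hi w).map (fun u => (u, w)))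
    (by
      intro a a' b hb hb'
      simp only [Option.mem_def, Option.map_eq_some_iff] at hb hb'
      obtain ⟨w, -, rfl⟩ := hb
      obtain ⟨w', -, h⟩ := hb'
      exact ((Prod.ext_iff.mp h).2).symm))

lemma mem_og {fo hi : W → Option W} {u w : W} :
    (u, w) ∈ og fo hi ↔ fo u = some w ∨ hi w = some u := by
  simp only [og, Finset.mem_union, Finset.mem_filterMap, Finset.mem_univ, true_and,
    Option.map_eq_some_iff, Prod.mk.injEq]
  constructor
  · rintro (⟨v, x, hx, rfl, rfl⟩ | ⟨v, x, hx, rfl, rfl⟩)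
    · exact Or.inl hx
    · exact Or.inr hx
  · rintro (h | h)
    · exact Or.inl ⟨u, w, h, rfl, rfl⟩
    · exact Or.inr ⟨w, u, h, rfl, rfl⟩

noncomputable def outMult (R : Finset (W × W)) (v : W) : ℕ :=
  (R.filter (fun q => q.1 = v)).card

noncomputable def inMult (R : Finset (W × W)) (w : W) : ℕ :=
  (R.filter (fun q => q.2 = w)).card

open Classical in
lemma outMult_og (fo hi : W → Option W) (v : W) :
    outMult (og fo hi) v
      = (Finset.univ.filter (fun w => fo v = some w ∨ hi w = some v)).card := by
  unfold outMult
  apply Finset.card_bij (fun q _ => q.2)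
  · rintro ⟨u, w⟩ hq
    simp only [Finset.mem_filter] at hq
    obtain ⟨hm, rfl⟩ := hq
    simp only [Finset.mem_filter, Finset.mem_univ, true_and]
    exact mem_og.mp hm
  · rintro ⟨u, w⟩ hq ⟨u', w'⟩ hq' h
    simp only [Finset.mem_filter] at hq hq'
    cases h
    rw [Prod.ext_iff]
    exact ⟨hq.2.trans hq'.2.symm, rfl⟩
  · intro w hw
    simp only [Finset.mem_filter, Finset.mem_univ, true_and] at hw
    exact ⟨(v, w), Finset.mem_filter.mpr ⟨mem_og.mpr hw, rfl⟩, rfl⟩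

open Classical in
lemma inMult_og (fo hi : W → Option W) (w : W) :
    inMult (og fo hi) w
      = (Finset.univ.filter (fun u => fo u = some w ∨ hi w = some u)).card := by
  unfold inMult
  apply Finset.card_bij (fun q _ => q.1)
  · rintro ⟨u, x⟩ hq
    simp only [Finset.mem_filter] at hq
    simp only [Finset.mem_filter, Finset.mem_univ, true_and]
    exact mem_og.mp (hq.2 ▸ hq.1)
  · rintro ⟨u, x⟩ hq ⟨u', x'⟩ hq' h
    simp only [Finset.mem_filter] at hq hq'
    cases h
    rw [Prod.ext_iff]
    exact ⟨rfl, hq.2.trans hq'.2.symm⟩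
  · intro u hu
    simp only [Finset.mem_filter, Finset.mem_univ, true_and] at hu
    exact ⟨(u, w), Finset.mem_filter.mpr ⟨mem_og.mpr hu, rfl⟩, rfl⟩

lemma card_eq_one_of {s : Finset W} {w₀ : W} (h₀ : w₀ ∈ s) (h : ∀ w ∈ s, w = w₀) :
    s.card = 1 := by
  rw [Finset.card_eq_one]
  refine ⟨w₀, ?_⟩
  ext w
  simp only [Finset.mem_singleton]
  exact ⟨h w, fun hw => hw ▸ h₀⟩

lemma card_eq_zero_of {s : Finset W} (h : ∀ w ∈ s, False) : s.card = 0 := by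
  rw [Finset.card_eq_zero]
  exact Finset.eq_empty_of_forall_notMem h

end OG

/-! ### The per-symbol edge relation -/

section PerSym

variable {S : Finset (Elem σ)}

open Classical in
/-- For each symbol, an edge relation on the canonical node set realizing all
degree constraints and containing the required path edges. -/
lemma persym (hS : IsSchema S) (hwf : WellFormed S) {n : ℕ}
    (g : Fin (n+1) → Elem σ) (hg : ∀ i, g i ∈ DNorm S) (lab : Fin n → σ)
    (hl1 : ∀ j : Fin n, lab j ∈ syms (g j.castSucc).2)
    (hl2 : ∀ j : Fin n, lab j ∈ syms (g j.succ).1)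
    (a : σ) :
    ∃ R : Finset (({x // x ∈ DNorm S} × Fin (n+1)) × ({x // x ∈ DNorm S} × Fin (n+1))),
      (∀ j : Fin n, lab j = a →
        ((⟨g j.castSucc, hg _⟩, j.castSucc), (⟨g j.succ, hg _⟩, j.succ)) ∈ R) ∧
      (∀ v, occursUnstarred a (v.1.1).2 → outMult R v = 1) ∧
      (∀ v, a ∉ syms (v.1.1).2 → outMult R v = 0) ∧
      (∀ v, occursUnstarred a (v.1.1).1 → inMult R v = 1) ∧
      (∀ v, a ∉ syms (v.1.1).1 → inMult R v = 0) := by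
  classical
  set V : Type := ({x // x ∈ DNorm S} × Fin (n+1)) with hV
  let node : Fin (n+1) → V := fun i => (⟨g i, hg i⟩, i)
  have node_inj : Function.Injective node := by
    intro i j h
    exact congrArg Prod.snd h
  have fin_step : ∀ j : Fin n, (Fin.castSucc j + 1 : Fin (n+1)) = Fin.succ j := by
    intro j
    apply Fin.ext
    rw [Fin.val_add]
    have h1 : ((1 : Fin (n+1)) : ℕ) = 1 % (n+1) := rfl
    have hj : (j : ℕ) < n := j.isLt
    rw [h1]
    simp only [Fin.coe_castSucc, Fin.val_succ]
    rw [Nat.mod_eq_of_lt (show 1 < n + 1 by omega),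
      Nat.mod_eq_of_lt (show (j : ℕ) + 1 < n + 1 by omega)]
  by_cases hrr : (∃ eh ∈ DNorm S, occursUnstarred a eh.2 ∧ ¬ FlexIn S a) ∨
      (∃ eh ∈ DNorm S, occursUnstarred a eh.1 ∧ ¬ FlexOut S a)
  · -- rigid case: unique unstarred in- and out-elements, full matching
    obtain ⟨eo, heo, ei, hei, hou, hiu, huo, hui⟩ := rigid_case hS hwf hrr
    refine ⟨og (fun v => if v.1.1 = eo then some ((⟨ei, hei⟩ : {x // x ∈ DNorm S}), v.2 + 1)
        else none) (fun _ => none), ?_, ?_, ?_, ?_, ?_⟩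
    · intro j hj
      rw [mem_og]
      left
      have h1 : g (Fin.castSucc j) = eo := huo _ (hg _) (hj ▸ hl1 j)
      have h2 : g (Fin.succ j) = ei := hui _ (hg _) (hj ▸ hl2 j)
      rw [if_pos h1]
      congr 1
      refine Prod.ext ?_ ?_
      · exact Subtype.ext h2.symm
      · exact fin_step j
    · intro v hv
      have hveo : v.1.1 = eo := huo _ v.1.2 (mem_syms_of_unstarred hv)
      rw [outMult_og]
      apply card_eq_one_of (w₀ := ((⟨ei, hei⟩ : {x // x ∈ DNorm S}), v.2 + 1))
      · simp only [Finset.mem_filter, Finset.mem_univ, true_and]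
        left; rw [if_pos hveo]
      · intro w hw
        simp only [Finset.mem_filter, Finset.mem_univ, true_and] at hw
        rcases hw with hw | hw
        · rw [if_pos hveo] at hw; exact (Option.some_injective _ hw).symm
        · exact absurd hw (by simp)
    · intro v hv
      have hne : v.1.1 ≠ eo := by
        intro h
        exact hv (h ▸ mem_syms_of_unstarred hou)
      rw [outMult_og]
      apply card_eq_zero_of
      intro w hw
      simp only [Finset.mem_filter, Finset.mem_univ, true_and] at hw
      rcases hw with hw | hw
      · rw [if_neg hne] at hw; exact nomatch hw
      · exact nomatch hw
    · intro v hv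
      have hvei : v.1.1 = ei := hui _ v.1.2 (mem_syms_of_unstarred hv)
      rw [inMult_og]
      apply card_eq_one_of (w₀ := ((⟨eo, heo⟩ : {x // x ∈ DNorm S}), v.2 - 1))
      · simp only [Finset.mem_filter, Finset.mem_univ, true_and]
        left
        rw [if_true]
        congr 1
        refine Prod.ext ?_ ?_
        · exact Subtype.ext hvei.symm
        · exact sub_add_cancel v.2 1
      · intro u hu
        simp only [Finset.mem_filter, Finset.mem_univ, true_and] at hu
        rcases hu with hu | hu
        · by_cases h : u.1.1 = eo
          · rw [if_pos h] at hu
            have := Option.some_injective _ hu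
            refine Prod.ext ?_ ?_
            · exact Subtype.ext h
            · have h2 : u.2 + 1 = v.2 := congrArg Prod.snd this
              exact eq_sub_of_add_eq h2
          · rw [if_neg h] at hu; exact absurd hu (by simp)
        · exact absurd hu (by simp)
    · intro v hv
      rw [inMult_og]
      apply card_eq_zero_of
      intro u hu
      simp only [Finset.mem_filter, Finset.mem_univ, true_and] at hu
      rcases hu with hu | hu
      · by_cases h : u.1.1 = eo
        · rw [if_pos h] at hu
          have := Option.some_injective _ hu
          have h1 : v.1.1 = ei := by
            have := congrArg (fun q => (Prod.fst q : {x // x ∈ DNorm S}).1) this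
            exact this.symm
          exact hv (h1 ▸ mem_syms_of_unstarred hiu)
        · rw [if_neg h] at hu; exact nomatch hu
      · exact nomatch hu
  · -- flexible case: dump surpluses at starred slots
    have h1 : ∀ eh ∈ DNorm S, occursUnstarred a eh.2 → FlexIn S a := by
      intro eh hm hu
      by_contra hn
      exact hrr (Or.inl ⟨eh, hm, hu, hn⟩)
    have h2 : ∀ eh ∈ DNorm S, occursUnstarred a eh.1 → FlexOut S a := by
      intro eh hm hu
      by_contra hn
      exact hrr (Or.inr ⟨eh, hm, hu, hn⟩)
    -- a dump node with a starred `in` slot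
    obtain ⟨z, hz⟩ : ∃ z : V, FlexIn S a →
        (a ∈ syms (z.1.1).1 ∧ ¬ occursUnstarred a (z.1.1).1) := by
      by_cases hfi : FlexIn S a
      · obtain ⟨eh, hm, hs, hns⟩ := hfi
        exact ⟨((⟨eh, hm⟩ : {x // x ∈ DNorm S}), 0), fun _ => ⟨hs, hns⟩⟩
      · exact ⟨node 0, fun h => absurd h hfi⟩
    obtain ⟨y, hy⟩ : ∃ y : V, FlexOut S a →
        (a ∈ syms (y.1.1).2 ∧ ¬ occursUnstarred a (y.1.1).2) := by
      by_cases hfo : FlexOut S a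
      · obtain ⟨eh, hm, hs, hns⟩ := hfo
        exact ⟨((⟨eh, hm⟩ : {x // x ∈ DNorm S}), 0), fun _ => ⟨hs, hns⟩⟩
      · exact ⟨node 0, fun h => absurd h hfo⟩
    set fo : V → Option V := fun v =>
      if h : ∃ j : Fin n, lab j = a ∧ node (Fin.castSucc j) = v then
        some (node (Fin.succ h.choose))
      else if occursUnstarred a (v.1.1).2 then some z else none with hfo_def
    set hi : V → Option V := fun w =>
      if (∃ j : Fin n, lab j = a ∧ node (Fin.succ j) = w) then none
      else if occursUnstarred a (w.1.1).1 then some y else none with hhi_def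
    -- facts about fo
    have fo_tail : ∀ j : Fin n, lab j = a → fo (node (Fin.castSucc j)) = some (node (Fin.succ j)) := by
      intro j hj
      have hex : ∃ j' : Fin n, lab j' = a ∧ node (Fin.castSucc j') = node (Fin.castSucc j) :=
        ⟨j, hj, rfl⟩
      rw [hfo_def]
      simp only
      rw [dif_pos hex]
      have hch := hex.choose_spec
      have : hex.choose = j := Fin.castSucc_injective _ (node_inj hch.2)
      rw [this]
    have fo_some_cases : ∀ v w : V, fo v = some w →
        ((∃ j : Fin n, lab j = a ∧ node (Fin.castSucc j) = v ∧ node (Fin.succ j) = w) ∨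
         (¬ (∃ j : Fin n, lab j = a ∧ node (Fin.castSucc j) = v) ∧
            occursUnstarred a (v.1.1).2 ∧ w = z)) := by
      intro v w hw
      rw [hfo_def] at hw
      simp only at hw
      by_cases hex : ∃ j : Fin n, lab j = a ∧ node (Fin.castSucc j) = v
      · rw [dif_pos hex] at hw
        have hch := hex.choose_spec
        exact Or.inl ⟨hex.choose, hch.1, hch.2, Option.some_injective _ hw⟩
      · rw [dif_neg hex] at hw
        by_cases hu : occursUnstarred a (v.1.1).2
        · rw [if_pos hu] at hw
          exact Or.inr ⟨hex, hu, (Option.some_injective _ hw).symm⟩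
        · rw [if_neg hu] at hw; exact nomatch hw
    have hi_some_cases : ∀ w u : V, hi w = some u →
        (¬ (∃ j : Fin n, lab j = a ∧ node (Fin.succ j) = w) ∧
          occursUnstarred a (w.1.1).1 ∧ u = y) := by
      intro w u hu
      rw [hhi_def] at hu
      simp only at hu
      by_cases hex : ∃ j : Fin n, lab j = a ∧ node (Fin.succ j) = w
      · rw [if_pos hex] at hu; exact nomatch hu
      · rw [if_neg hex] at hu
        by_cases hiu : occursUnstarred a (w.1.1).1
        · rw [if_pos hiu] at hu
          exact ⟨hex, hiu, (Option.some_injective _ hu).symm⟩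
        · rw [if_neg hiu] at hu; exact nomatch hu
    refine ⟨og fo hi, ?_, ?_, ?_, ?_, ?_⟩
    · intro j hj
      rw [mem_og]
      exact Or.inl (fo_tail j hj)
    · -- out multiplicity of forced-out nodes is 1
      intro v hv
      rw [outMult_og]
      have hfo_some : ∃ w₀, fo v = some w₀ := by
        rw [hfo_def]
        simp only
        by_cases hex : ∃ j : Fin n, lab j = a ∧ node (Fin.castSucc j) = v
        · rw [dif_pos hex]; exact ⟨_, rfl⟩
        · rw [dif_neg hex, if_pos hv]; exact ⟨_, rfl⟩
      obtain ⟨w₀, hw₀⟩ := hfo_some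
      apply card_eq_one_of (w₀ := w₀)
      · simp only [Finset.mem_filter, Finset.mem_univ, true_and]
        exact Or.inl hw₀
      · intro w hw
        simp only [Finset.mem_filter, Finset.mem_univ, true_and] at hw
        rcases hw with hw | hw
        · rw [hw₀] at hw; exact (Option.some_injective _ hw).symm
        · obtain ⟨-, hwu, rfl⟩ := hi_some_cases _ _ hw
          have hflex : FlexOut S a := h2 _ w.1.2 hwu
          exact absurd hv (hy hflex).2
    · -- out multiplicity outside syms is 0
      intro v hv
      rw [outMult_og]
      apply card_eq_zero_of
      intro w hw
      simp only [Finset.mem_filter, Finset.mem_univ, true_and] at hw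
      rcases hw with hw | hw
      · rcases fo_some_cases _ _ hw with ⟨j, hj, hjv, -⟩ | ⟨-, hu, -⟩
        · apply hv
          have : (node (Fin.castSucc j)).1.1 = v.1.1 := by rw [hjv]
          rw [← this]
          exact hj ▸ hl1 j
        · exact hv (mem_syms_of_unstarred hu)
      · obtain ⟨-, hwu, rfl⟩ := hi_some_cases _ _ hw
        have hflex : FlexOut S a := h2 _ w.1.2 hwu
        exact hv (hy hflex).1
    · -- in multiplicity of forced-in nodes is 1
      intro w hw
      rw [inMult_og]
      by_cases hhead : ∃ j : Fin n, lab j = a ∧ node (Fin.succ j) = w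
      · obtain ⟨j, hj, hjw⟩ := hhead
        apply card_eq_one_of (w₀ := node (Fin.castSucc j))
        · simp only [Finset.mem_filter, Finset.mem_univ, true_and]
          exact Or.inl (hjw ▸ fo_tail j hj)
        · intro u hu
          simp only [Finset.mem_filter, Finset.mem_univ, true_and] at hu
          rcases hu with hu | hu
          · rcases fo_some_cases _ _ hu with ⟨j', hj', hjv', hjw'⟩ | ⟨-, hvu, rfl⟩
            · have : j' = j := by
                apply Fin.succ_injective
                apply node_inj
                rw [hjw', hjw]
              rw [← hjv', this]
            · -- w = z is impossible since z is not forced-in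
              exfalso
              exact (hz (h1 _ u.1.2 hvu)).2 hw
          · obtain ⟨hnex, -, -⟩ := hi_some_cases _ _ hu
            exact absurd ⟨j, hj, hjw⟩ hnex
      · apply card_eq_one_of (w₀ := y)
        · simp only [Finset.mem_filter, Finset.mem_univ, true_and]
          right
          rw [hhi_def]
          simp only
          rw [if_neg hhead, if_pos hw]
        · intro u hu
          simp only [Finset.mem_filter, Finset.mem_univ, true_and] at hu
          rcases hu with hu | hu
          · rcases fo_some_cases _ _ hu with ⟨j, hj, hjv, hjw⟩ | ⟨-, hvu, rfl⟩
            · exact absurd ⟨j, hj, hjw⟩ hhead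
            · exfalso
              exact (hz (h1 _ u.1.2 hvu)).2 hw
          · exact (hi_some_cases _ _ hu).2.2
    · -- in multiplicity outside syms is 0
      intro w hw
      rw [inMult_og]
      apply card_eq_zero_of
      intro u hu
      simp only [Finset.mem_filter, Finset.mem_univ, true_and] at hu
      rcases hu with hu | hu
      · rcases fo_some_cases _ _ hu with ⟨j, hj, hjv, hjw⟩ | ⟨-, hvu, rfl⟩
        · apply hw
          have : (node (Fin.succ j)).1.1 = w.1.1 := by rw [hjw]
          rw [← this]
          exact hj ▸ hl2 j
        · have hflex : FlexIn S a := h1 _ u.1.2 hvu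
          exact hw (hz hflex).1
      · obtain ⟨-, hwu, -⟩ := hi_some_cases _ _ hu
        exact hw (mem_syms_of_unstarred hwu)

end PerSym

open Classical in
/-- The canonical conforming graph containing a prescribed schema path. -/
lemma graph_exists (hS : IsSchema S) (hwf : WellFormed S) {n : ℕ}
    (g : Fin (n+1) → Elem σ) (hg : ∀ i, g i ∈ DNorm S) (lab : Fin n → σ)
    (hl1 : ∀ j : Fin n, lab j ∈ syms (g j.castSucc).2)
    (hl2 : ∀ j : Fin n, lab j ∈ syms (g j.succ).1) :
    ∃ E : Finset (({x // x ∈ DNorm S} × Fin (n+1)) × σ × ({x // x ∈ DNorm S} × Fin (n+1))),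
      (∀ v, inLabels E v ∈ resem (v.1.1 : Elem σ).1 ∧ outLabels E v ∈ resem (v.1.1 : Elem σ).2) ∧
      (∀ j : Fin n,
        ((⟨g j.castSucc, hg _⟩, j.castSucc), lab j, (⟨g j.succ, hg _⟩, j.succ)) ∈ E) := by
  classical
  set V : Type := ({x // x ∈ DNorm S} × Fin (n+1)) with hV
  choose R hR1 hR2 hR3 hR4 hR5 using persym hS hwf g hg lab hl1 hl2
  set A : Finset σ := (DNorm S).biUnion (fun eh => syms eh.1 ∪ syms eh.2) with hA
  set E : Finset (V × σ × V) :=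
    A.biUnion (fun a => (R a).image (fun q => (q.1, a, q.2))) with hE
  have memE : ∀ t : V × σ × V, t ∈ E ↔ t.2.1 ∈ A ∧ (t.1, t.2.2) ∈ R t.2.1 := by
    intro t
    rw [hE]
    simp only [Finset.mem_biUnion, Finset.mem_image]
    constructor
    · rintro ⟨a, ha, q, hq, rfl⟩
      exact ⟨ha, hq⟩
    · rintro ⟨ha, hq⟩
      exact ⟨t.2.1, ha, (t.1, t.2.2), hq, rfl⟩
  -- counting incoming labels
  have count_in : ∀ (v : V) (a : σ),
      (inLabels E v).count a = if a ∈ A then inMult (R a) v else 0 := by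
    intro v a
    unfold inLabels
    rw [Multiset.count_map]
    by_cases ha : a ∈ A
    · rw [if_pos ha]
      unfold inMult
      rw [show ((E.filter (fun t => t.2.2 = v)).val.filter (fun t => a = t.2.1)).card
            = (((E.filter (fun t => t.2.2 = v)).filter (fun t => a = t.2.1)).card) from rfl]
      rw [Finset.filter_filter]
      apply Finset.card_bij (fun t _ => (t.1, t.2.2))
      · rintro ⟨u, b, w⟩ ht
        simp only [Finset.mem_filter] at ht ⊢
        obtain ⟨htE, rfl, rfl⟩ := ht
        exact ⟨((memE _).mp htE).2, rfl⟩
      · rintro ⟨u, b, w⟩ ht ⟨u', b', w'⟩ ht' hh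
        simp only [Finset.mem_filter] at ht ht'
        obtain ⟨-, rfl, rfl⟩ := ht
        obtain ⟨-, rfl, rfl⟩ := ht'
        simp only [Prod.mk.injEq] at hh
        simp [Prod.ext_iff, hh.1, hh.2]
      · rintro ⟨u, w⟩ hq
        simp only [Finset.mem_filter] at hq
        refine ⟨(u, a, w), ?_, rfl⟩
        simp only [Finset.mem_filter]
        exact ⟨(memE _).mpr ⟨ha, hq.1⟩, hq.2, trivial⟩
    · rw [if_neg ha]
      rw [Multiset.card_eq_zero]
      rw [Multiset.filter_eq_nil]
      intro t ht
      rw [Finset.mem_val, Finset.mem_filter] at ht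
      intro hat
      apply ha
      have := ((memE t).mp ht.1).1
      rwa [← hat] at this
  have count_out : ∀ (v : V) (a : σ),
      (outLabels E v).count a = if a ∈ A then outMult (R a) v else 0 := by
    intro v a
    unfold outLabels
    rw [Multiset.count_map]
    by_cases ha : a ∈ A
    · rw [if_pos ha]
      unfold outMult
      rw [show ((E.filter (fun t => t.1 = v)).val.filter (fun t => a = t.2.1)).card
            = (((E.filter (fun t => t.1 = v)).filter (fun t => a = t.2.1)).card) from rfl]
      rw [Finset.filter_filter]
      apply Finset.card_bij (fun t _ => (t.1, t.2.2))
      · rintro ⟨u, b, w⟩ ht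
        simp only [Finset.mem_filter] at ht ⊢
        obtain ⟨htE, rfl, rfl⟩ := ht
        exact ⟨((memE _).mp htE).2, rfl⟩
      · rintro ⟨u, b, w⟩ ht ⟨u', b', w'⟩ ht' hh
        simp only [Finset.mem_filter] at ht ht'
        obtain ⟨-, rfl, rfl⟩ := ht
        obtain ⟨-, rfl, rfl⟩ := ht'
        simp only [Prod.mk.injEq] at hh
        simp [Prod.ext_iff, hh.1, hh.2]
      · rintro ⟨u, w⟩ hq
        simp only [Finset.mem_filter] at hq
        refine ⟨(u, a, w), ?_, rfl⟩
        simp only [Finset.mem_filter]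
        exact ⟨(memE _).mpr ⟨ha, hq.1⟩, hq.2, trivial⟩
    · rw [if_neg ha]
      rw [Multiset.card_eq_zero]
      rw [Multiset.filter_eq_nil]
      intro t ht
      rw [Finset.mem_val, Finset.mem_filter] at ht
      intro hat
      apply ha
      have := ((memE t).mp ht.1).1
      rwa [← hat] at this
  refine ⟨E, ?_, ?_⟩
  · intro v
    constructor
    · apply mem_resem_of_counts (DNorm_cf hS v.1.2).1.1 (DNorm_cf hS v.1.2).1.2
      · intro a hs
        rw [count_in]
        by_cases ha : a ∈ A
        · rw [if_pos ha]; exact hR5 a v hs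
        · rw [if_neg ha]
      · intro a hu
        have hs : a ∈ syms (v.1.1 : Elem σ).1 := mem_syms_of_unstarred hu
        have ha : a ∈ A := by
          rw [hA]
          exact Finset.mem_biUnion.mpr ⟨v.1.1, v.1.2, Finset.mem_union_left _ hs⟩
        rw [count_in, if_pos ha]
        exact hR4 a v hu
    · apply mem_resem_of_counts (DNorm_cf hS v.1.2).2.1 (DNorm_cf hS v.1.2).2.2
      · intro a hs
        rw [count_out]
        by_cases ha : a ∈ A
        · rw [if_pos ha]; exact hR3 a v hs
        · rw [if_neg ha]
      · intro a hu
        have hs : a ∈ syms (v.1.1 : Elem σ).2 := mem_syms_of_unstarred hu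
        have ha : a ∈ A := by
          rw [hA]
          exact Finset.mem_biUnion.mpr ⟨v.1.1, v.1.2, Finset.mem_union_right _ hs⟩
        rw [count_out, if_pos ha]
        exact hR2 a v hu
  · intro j
    rw [memE]
    constructor
    · rw [hA]
      apply Finset.mem_biUnion.mpr
      exact ⟨g j.castSucc, hg _, Finset.mem_union_right _ (hl1 j)⟩
    · exact hR1 (lab j) j rfl

/-! ### From inference to schema paths -/

lemma sconnects_append {S : Finset (Elem σ)} {p₁ p₂ : List σ} {e₁ e e₂ : Elem σ}
    (h1 : SConnects S p₁ e₁ e) (h2 : SConnects S p₂ e e₂) :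
    SConnects S (p₁ ++ p₂) e₁ e₂ := by
  induction h1 with
  | nil e => exact h2
  | cons hm ha1 ha2 h ih => exact SConnects.cons hm ha1 ha2 (ih h2)

lemma spow_path (S : Finset (Elem σ)) (q : RPQ σ)
    (hq : ∀ ee ∈ rpqInf S q, ee.1 ∈ S ∧ ee.2 ∈ S ∧
      ∃ p ∈ pathsOf q, SConnects S p ee.1 ee.2) :
    ∀ i, ∀ ee ∈ spowRel S (rpqInf S q) i, ee.1 ∈ S ∧ ee.2 ∈ S ∧
      ∃ p ∈ pathsOf (RPQ.star q), SConnects S p ee.1 ee.2 := by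
  intro i
  induction i with
  | zero =>
      rintro ee ⟨h1, h2⟩
      exact ⟨h1, h2 ▸ h1, [], ⟨[], by simp, rfl⟩, h2 ▸ SConnects.nil _⟩
  | succ i ih =>
      rintro ee ⟨m, hm1, hm2⟩
      obtain ⟨h1, hmS, p₁, ⟨l, hl, rfl⟩, hc1⟩ := ih (ee.1, m) hm1
      obtain ⟨-, h2, p₂, hp₂, hc2⟩ := hq (m, ee.2) hm2
      refine ⟨h1, h2, l.flatten ++ p₂, ⟨l ++ [p₂], ?_, by simp⟩,
        sconnects_append hc1 hc2⟩
      intro x hx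
      rcases List.mem_append.mp hx with hx | hx
      · exact hl x hx
      · rw [List.mem_singleton.mp hx]; exact hp₂

lemma infer_path (S : Finset (Elem σ)) (q : RPQ σ) :
    ∀ ee ∈ rpqInf S q, ee.1 ∈ S ∧ ee.2 ∈ S ∧
      ∃ p ∈ pathsOf q, SConnects S p ee.1 ee.2 := by
  induction q with
  | eps =>
      rintro ee ⟨h1, h2⟩
      exact ⟨h1, h2 ▸ h1, [], rfl, h2 ▸ SConnects.nil _⟩
  | sym a =>
      rintro ee ⟨h1, h2, ha1, ha2⟩
      exact ⟨h1, h2, [a], rfl, SConnects.cons h2 ha1 ha2 (SConnects.nil _)⟩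
  | union q₁ q₂ ih₁ ih₂ =>
      rintro ee (h | h)
      · obtain ⟨h1, h2, p, hp, hc⟩ := ih₁ ee h
        exact ⟨h1, h2, p, Or.inl hp, hc⟩
      · obtain ⟨h1, h2, p, hp, hc⟩ := ih₂ ee h
        exact ⟨h1, h2, p, Or.inr hp, hc⟩
  | conc q₁ q₂ ih₁ ih₂ =>
      rintro ee ⟨m, hm1, hm2⟩
      obtain ⟨h1, -, p₁, hp₁, hc1⟩ := ih₁ (ee.1, m) hm1
      obtain ⟨-, h2, p₂, hp₂, hc2⟩ := ih₂ (m, ee.2) hm2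
      exact ⟨h1, h2, p₁ ++ p₂, ⟨p₁, hp₁, p₂, hp₂, rfl⟩, sconnects_append hc1 hc2⟩
  | star q ih =>
      intro ee hee
      obtain ⟨i, hi⟩ := Set.mem_iUnion.mp hee
      exact spow_path S q ih i ee hi

/-! ### From graph paths to semantics -/

lemma gconnects_append_split {V : Type} {Es : Set (V × σ × V)} :
    ∀ (p₁ p₂ : List σ) (u v : V), GConnects Es (p₁ ++ p₂) u v →
      ∃ m, GConnects Es p₁ u m ∧ GConnects Es p₂ m v := by
  intro p₁
  induction p₁ with
  | nil => exact fun p₂ u v h => ⟨u, GConnects.nil u, h⟩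
  | cons a p ih =>
      intro p₂ u v h
      cases h with
      | cons he h' =>
          obtain ⟨m, h1, h2⟩ := ih p₂ _ v h'
          exact ⟨m, GConnects.cons he h1, h2⟩

lemma powRel_cons {α : Type} {R : Set (α × α)} {u m : α} (h1 : (u, m) ∈ R) :
    ∀ (i : ℕ) (v : α), (m, v) ∈ powRel R i → (u, v) ∈ powRel R (i+1) := by
  intro i
  induction i with
  | zero =>
      intro v h
      have hmv : m = v := h
      exact ⟨u, rfl, hmv ▸ h1⟩
  | succ i ih =>
      rintro v ⟨w, hw1, hw2⟩
      exact ⟨w, ih w hw1, hw2⟩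

lemma star_aux {V : Type} {Es : Set (V × σ × V)} (q : RPQ σ)
    (ih : ∀ p ∈ pathsOf q, ∀ u v : V, GConnects Es p u v → (u, v) ∈ rpqSem Es q) :
    ∀ (l : List (List σ)), (∀ x ∈ l, x ∈ pathsOf q) → ∀ u v : V,
      GConnects Es l.flatten u v → (u, v) ∈ rpqSem Es (RPQ.star q) := by
  intro l
  induction l with
  | nil =>
      intro _ u v h
      cases h
      exact Set.mem_iUnion.mpr ⟨0, rfl⟩
  | cons x l' ihl =>
      intro hl u v h
      rw [List.flatten_cons] at h
      obtain ⟨m, h1, h2⟩ := gconnects_append_split x l'.flatten u v h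
      have hx := ih x (hl x (List.mem_cons_self)) u m h1
      have hrest := ihl (fun y hy => hl y (List.mem_cons_of_mem _ hy)) m v h2
      obtain ⟨i, hi⟩ := Set.mem_iUnion.mp hrest
      exact Set.mem_iUnion.mpr ⟨i + 1, powRel_cons hx i v hi⟩

lemma path_sem {V : Type} {Es : Set (V × σ × V)} (q : RPQ σ) :
    ∀ p ∈ pathsOf q, ∀ u v : V, GConnects Es p u v → (u, v) ∈ rpqSem Es q := by
  induction q with
  | eps =>
      rintro p rfl u v h
      cases h
      rfl
  | sym a =>
      rintro p rfl u v h
      cases h with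
      | cons he h' =>
          cases h'
          exact he
  | union q₁ q₂ ih₁ ih₂ =>
      rintro p (hp | hp) u v h
      · exact Or.inl (ih₁ p hp u v h)
      · exact Or.inr (ih₂ p hp u v h)
  | conc q₁ q₂ ih₁ ih₂ =>
      rintro p ⟨p₁, hp₁, p₂, hp₂, rfl⟩ u v h
      obtain ⟨m, h1, h2⟩ := gconnects_append_split p₁ p₂ u v h
      exact ⟨m, ih₁ p₁ hp₁ u m h1, ih₂ p₂ hp₂ m v h2⟩
  | star q ih =>
      rintro p ⟨l, hl, rfl⟩ u v h
      exact star_aux q ih l hl u v h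

/-! ### Extraction of schema paths as indexed families -/

lemma sconnects_extract {S : Finset (Elem σ)} {p : List σ} {e₁ e₂ : Elem σ}
    (h : SConnects S p e₁ e₂) :
    e₁ ∈ S → ∃ g : ℕ → Elem σ, g 0 = e₁ ∧ g p.length = e₂ ∧ (∀ i ≤ p.length, g i ∈ S) ∧
      (∀ (i : ℕ) (hi : i < p.length),
        p.get ⟨i, hi⟩ ∈ syms (g i).2 ∧ p.get ⟨i, hi⟩ ∈ syms (g (i+1)).1) := by
  induction h with
  | nil e =>
      intro he
      exact ⟨fun _ => e, rfl, rfl, fun i _ => he, fun i hi => absurd hi (by simp)⟩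
  | @cons e₀ e eₜ a p hm ha1 ha2 h ih =>
      intro he₀
      obtain ⟨g, hg0, hgl, hgS, hgc⟩ := ih hm
      refine ⟨fun i => Nat.casesOn i e₀ (fun k => g k), rfl, hgl, ?_, ?_⟩
      · intro i hi
        cases i with
        | zero => exact he₀
        | succ k => exact hgS k (by simpa using hi)
      · intro i hi
        cases i with
        | zero =>
            refine ⟨ha1, ?_⟩
            show a ∈ syms (g 0).1
            rw [hg0]
            exact ha2
        | succ k => exact hgc k (by simpa using hi)

end REAux

/-- Completeness of RPQ type inference over well-formed schemas. -/
theorem rpq_inference_complete {σ : Type} [DecidableEq σ]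
    (S : Finset (Elem σ)) (hS : IsSchema S) (hwf : WellFormed S) (q : RPQ σ) :
    ∀ ee ∈ rpqInf S q,
      ∃ (V : Type) (_ : DecidableEq V) (_ : Fintype V)
        (E : Finset (V × σ × V)),
        Conforms E S ∧
        ∃ u v : V, (u, v) ∈ rpqSem (edgeSet E) q ∧
          HasType E u ee.1 ∧ HasType E v ee.2 := by
  classical
  intro ee hee
  obtain ⟨h1S, h2S, p, hp, hcon⟩ := infer_path S q ee hee
  obtain ⟨g, hg0, hgl, hgS, hgc⟩ := sconnects_extract hcon h1S
  have refine_ex : ∀ i : Fin (p.length + 1), ∃ eh : Elem σ, eh ∈ DNorm S ∧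
      resem eh.1 ⊆ resem (g i.val).1 ∧ resem eh.2 ⊆ resem (g i.val).2 ∧
      (∀ j : Fin p.length, j.succ = i → p.get j ∈ syms eh.1) ∧
      (∀ j : Fin p.length, j.castSucc = i → p.get j ∈ syms eh.2) := by
    intro i
    have he : g i.val ∈ S := hgS i.val (Nat.lt_succ_iff.mp i.isLt)
    have pkg1 : ∃ c₁ ∈ clauses (_root_.norm (g i.val).1),
        ∀ j : Fin p.length, j.succ = i → p.get j ∈ syms c₁ := by
      by_cases hex : ∃ j : Fin p.length, j.succ = i
      · obtain ⟨j, hj⟩ := hex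
        have hiv : (i : ℕ) = (j : ℕ) + 1 := by rw [← hj]; rfl
        have ha : p.get j ∈ syms (g ((j : ℕ) + 1)).1 := (hgc j.val j.isLt).2
        have ha' : p.get j ∈ syms (_root_.norm (g i.val).1) := by
          rw [syms_norm, hiv]; exact ha
        obtain ⟨c₁, hc₁, hac₁⟩ := exists_clause_of_mem_syms ha'
        refine ⟨c₁, hc₁, ?_⟩
        intro j' hj'
        have hjj : j' = j := Fin.succ_injective _ (hj'.trans hj.symm)
        rw [hjj]; exact hac₁
      · obtain ⟨c₁, hc₁⟩ := exists_clause (_root_.norm (g i.val).1)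
        exact ⟨c₁, hc₁, fun j hj => absurd ⟨j, hj⟩ hex⟩
    have pkg2 : ∃ c₂ ∈ clauses (_root_.norm (g i.val).2),
        ∀ j : Fin p.length, j.castSucc = i → p.get j ∈ syms c₂ := by
      by_cases hex : ∃ j : Fin p.length, j.castSucc = i
      · obtain ⟨j, hj⟩ := hex
        have hiv : (i : ℕ) = (j : ℕ) := by rw [← hj]; rfl
        have ha : p.get j ∈ syms (g (j : ℕ)).2 := (hgc j.val j.isLt).1
        have ha' : p.get j ∈ syms (_root_.norm (g i.val).2) := by
          rw [syms_norm, hiv]; exact ha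
        obtain ⟨c₂, hc₂, hac₂⟩ := exists_clause_of_mem_syms ha'
        refine ⟨c₂, hc₂, ?_⟩
        intro j' hj'
        have hjj : j' = j := Fin.castSucc_injective _ (hj'.trans hj.symm)
        rw [hjj]; exact hac₂
      · obtain ⟨c₂, hc₂⟩ := exists_clause (_root_.norm (g i.val).2)
        exact ⟨c₂, hc₂, fun j hj => absurd ⟨j, hj⟩ hex⟩
    obtain ⟨c₁, hc₁, hcond1⟩ := pkg1
    obtain ⟨c₂, hc₂, hcond2⟩ := pkg2
    refine ⟨(c₁, c₂), mem_DNorm.mpr ⟨g i.val, he, hc₁, hc₂⟩, ?_, ?_, hcond1, hcond2⟩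
    · have h := resem_of_mem_clauses hc₁; rwa [resem_norm] at h
    · have h := resem_of_mem_clauses hc₂; rwa [resem_norm] at h
  choose gh hmem hs1 hs2 hin hout using refine_ex
  obtain ⟨E, hEres, hEpath⟩ := graph_exists hS hwf gh hmem (fun j => p.get j)
    (fun j => hout j.castSucc j rfl) (fun j => hin j.succ j rfl)
  refine ⟨({x // x ∈ DNorm S} × Fin (p.length + 1)), inferInstance, inferInstance, E, ?_, ?_⟩
  · intro v
    obtain ⟨e, heS, hsub1, hsub2⟩ := DNorm_resem v.1.2
    exact ⟨e, heS, hsub1 (hEres v).1, hsub2 (hEres v).2⟩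
  · have gc : ∀ (d k : ℕ) (hk : k + d = p.length),
        GConnects (edgeSet E) ((List.ofFn (fun j : Fin p.length => p.get j)).drop k)
          ((⟨gh ⟨k, by omega⟩, hmem _⟩, ⟨k, by omega⟩) :
            {x // x ∈ DNorm S} × Fin (p.length + 1))
          ((⟨gh ⟨p.length, by omega⟩, hmem _⟩, ⟨p.length, by omega⟩) :
            {x // x ∈ DNorm S} × Fin (p.length + 1)) := by
      intro d
      induction d with
      | zero =>
          intro k hk
          have hkn : k = p.length := by omega
          subst hkn
          have hd : (List.ofFn (fun j : Fin p.length => p.get j)).drop p.length = [] :=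
            List.drop_eq_nil_of_le (by simp)
          rw [hd]
          exact GConnects.nil _
      | succ d ih =>
          intro k hk
          have hklt : k < p.length := by omega
          have hlt : k < (List.ofFn (fun j : Fin p.length => p.get j)).length := by
            simpa using hklt
          rw [List.drop_eq_getElem_cons hlt]
          have hget : (List.ofFn (fun j : Fin p.length => p.get j))[k] = p.get ⟨k, hklt⟩ := by
            simp
          rw [hget]
          exact GConnects.cons (hEpath ⟨k, hklt⟩) (ih (k+1) (by omega))
    have hgc0 := gc p.length 0 (by omega)
    rw [List.ofFn_get p] at hgc0
    rw [List.drop_zero] at hgc0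
    refine ⟨_, _, path_sem q p hp _ _ hgc0, ⟨?_, ?_⟩, ⟨?_, ?_⟩⟩
    · have h := hs1 ⟨0, by omega⟩
      rw [show ((⟨0, by omega⟩ : Fin (p.length+1)) : ℕ) = 0 from rfl, hg0] at h
      apply h
      exact (hEres ((⟨gh ⟨0, by omega⟩, hmem _⟩, ⟨0, by omega⟩) :
        {x // x ∈ DNorm S} × Fin (p.length + 1))).1
    · have h := hs2 ⟨0, by omega⟩
      rw [show ((⟨0, by omega⟩ : Fin (p.length+1)) : ℕ) = 0 from rfl, hg0] at h
      apply h
      exact (hEres ((⟨gh ⟨0, by omega⟩, hmem _⟩, ⟨0, by omega⟩) :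
        {x // x ∈ DNorm S} × Fin (p.length + 1))).2
    · have h := hs1 ⟨p.length, by omega⟩
      rw [show ((⟨p.length, by omega⟩ : Fin (p.length+1)) : ℕ) = p.length from rfl, hgl] at h
      apply h
      exact (hEres ((⟨gh ⟨p.length, by omega⟩, hmem _⟩, ⟨p.length, by omega⟩) :
        {x // x ∈ DNorm S} × Fin (p.length + 1))).1
    · have h := hs2 ⟨p.length, by omega⟩
      rw [show ((⟨p.length, by omega⟩ : Fin (p.length+1)) : ℕ) = p.length from rfl, hgl] at h
      apply h
      exact (hEres ((⟨gh ⟨p.length, by omega⟩, hmem _⟩, ⟨p.length, by omega⟩) :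
        {x // x ∈ DNorm S} × Fin (p.length + 1))).2
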